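/- arXiv:2110.04464 — 2 statements merged into one kernel-verified Lean document; each statement's English description precedes it below -/
import Mathlib

section
/- For all integers a ≥ 2 and b ≥ 1, the balanced spider S_{a,b} satisfies irr(S_{a,b}) = a(a−1) and Mo(S_{a,b}) = a²b² − ab². -/
open SimpleGraph Finset

attribute [local instance] Classical.propDecidable

noncomputable section

/-- `closerCount G u v` is the number of vertices of `G` strictly closer to `u` than to `v`. -/
def closerCount {V : Type*} [Fintype V] (G : SimpleGraph V) (u v : V) : ℕ :=
  (Finset.univ.filter fun w => G.dist w u < G.dist w v).card

/-- The Mostar index of a graph. -/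
def mostar {V : Type*} [Fintype V] (G : SimpleGraph V) : ℤ :=
  ∑ e ∈ G.edgeFinset,
    Sym2.lift ⟨fun u v => |(closerCount G u v : ℤ) - (closerCount G v u : ℤ)|,
      fun _ _ => abs_sub_comm _ _⟩ e

/-- Number of pendent vertices strictly closer to `u` than to `v`. -/
def pendentCloserCount {V : Type*} [Fintype V] (G : SimpleGraph V) (u v : V) : ℕ :=
  (Finset.univ.filter fun w => G.degree w = 1 ∧ G.dist w u < G.dist w v).card

/-- The terminal Mostar index of a graph. -/
def terminalMostar {V : Type*} [Fintype V] (G : SimpleGraph V) : ℤ :=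
  ∑ e ∈ G.edgeFinset,
    Sym2.lift ⟨fun u v => |(pendentCloserCount G u v : ℤ) - (pendentCloserCount G v u : ℤ)|,
      fun _ _ => abs_sub_comm _ _⟩ e

/-- The irregularity of a graph. -/
def irreg {V : Type*} [Fintype V] (G : SimpleGraph V) : ℤ :=
  ∑ e ∈ G.edgeFinset,
    Sym2.lift ⟨fun u v => |(G.degree u : ℤ) - (G.degree v : ℤ)|,
      fun _ _ => abs_sub_comm _ _⟩ e

/-- The total Mostar index of a graph. -/
def totalMostar {V : Type*} [Fintype V] (G : SimpleGraph V) : ℤ :=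
  ∑ e ∈ Finset.univ.sym2.filter (fun e => ¬ e.IsDiag),
    Sym2.lift ⟨fun u v => |(closerCount G u v : ℤ) - (closerCount G v u : ℤ)|,
      fun _ _ => abs_sub_comm _ _⟩ e

/-- The sum peripherality of a vertex. -/
def sprVertex {V : Type*} [Fintype V] (G : SimpleGraph V) (v : V) : ℕ :=
  ∑ u ∈ Finset.univ.erase v, closerCount G u v

/-- The sum peripherality of a graph. -/
def spr {V : Type*} [Fintype V] (G : SimpleGraph V) : ℕ :=
  ∑ v, sprVertex G v

/-- The peripherality of a vertex. -/
def periVertex {V : Type*} [Fintype V] (G : SimpleGraph V) (v : V) : ℕ :=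
  (Finset.univ.filter fun u => u ≠ v ∧ closerCount G v u < closerCount G u v).card

/-- The peripherality of a graph. -/
def peri {V : Type*} [Fintype V] (G : SimpleGraph V) : ℕ :=
  ∑ v, periVertex G v

/-- The edge peripherality of the edge `{u, v}`. -/
def edgePeri {V : Type*} [Fintype V] (G : SimpleGraph V) (u v : V) : ℕ :=
  (Finset.univ.filter fun x => x ≠ u ∧ x ≠ v ∧
    closerCount G u x < closerCount G x u ∧ closerCount G v x < closerCount G x v).card

/-- The edge degree of the edge `{u, v}`. -/
def edgeDeg {V : Type*} [Fintype V] (G : SimpleGraph V) (u v : V) : ℕ :=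
  (Finset.univ.filter fun x => x ≠ u ∧ x ≠ v ∧ (G.Adj x u ∨ G.Adj x v)).card

/-- The eccentricity of a vertex. -/
def ecc {V : Type*} [Fintype V] (G : SimpleGraph V) (w : V) : ℕ :=
  Finset.univ.sup fun v => G.dist w v

/-- The spider graph with `k` legs whose lengths are given by `L`: the center is `none`,
and `some ⟨i, j⟩` is the `j`-th vertex (counted from the center) on leg `i`. -/
def spider (k : ℕ) (L : Fin k → ℕ) : SimpleGraph (Option ((i : Fin k) × Fin (L i))) :=
  SimpleGraph.fromRel fun u v =>
    (∃ (i : Fin k) (j : Fin (L i)), u = none ∧ v = some ⟨i, j⟩ ∧ (j : ℕ) = 0) ∨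
    (∃ (i : Fin k) (j j' : Fin (L i)), u = some ⟨i, j⟩ ∧ v = some ⟨i, j'⟩ ∧
      (j' : ℕ) = (j : ℕ) + 1)

/-- The full `m`-ary tree of depth `d`: vertex `⟨i, j⟩` is the `j`-th vertex at depth `i`, and
its parent is vertex `⟨i - 1, j / m⟩`. -/
def fullAryTree (m d : ℕ) : SimpleGraph ((i : Fin (d + 1)) × Fin (m ^ (i : ℕ))) :=
  SimpleGraph.fromRel fun u v =>
    (u.1 : ℕ) + 1 = (v.1 : ℕ) ∧ (v.2 : ℕ) / m = (u.2 : ℕ)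

/-! In a spider, the distance between two vertices on the same leg is the difference of their
heights (distances to the centre), and otherwise their sum. Sending a non-centre vertex `x` to
the edge joining it to its parent enumerates the edges; the vertices strictly closer to `x`
than to its parent are exactly those at or beyond `x` on its leg, and every other vertex is
strictly closer to the parent. Both indices thus become explicit sums over the legs. -/

namespace SimpleGraph

theorem dist_eq_of_adj_le_of_exists_adj {V : Type*} (G : SimpleGraph V) (D : V → V → ℕ)
    (h_self : ∀ v, D v v = 0) (h_adj : ∀ u v w, G.Adj u v → D u w ≤ D v w + 1)
    (h_exists : ∀ u v, u ≠ v → ∃ w, G.Adj u w ∧ D w v + 1 = D u v) (u v : V) :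
    G.dist u v = D u v := by
  have exists_walk : ∀ n u v, D u v = n → ∃ p : G.Walk u v, p.length = n := by
    intro n
    induction n with
    | zero =>
      intro u v h
      by_cases huv : u = v
      · subst huv; exact ⟨.nil, rfl⟩
      · obtain ⟨w, -, hw⟩ := h_exists u v huv; omega
    | succ n ih =>
      intro u v h
      by_cases huv : u = v
      · subst huv; simp [h_self] at h
      obtain ⟨w, hadj, hw⟩ := h_exists u v huv
      obtain ⟨p, hp⟩ := ih w v (by omega)
      exact ⟨.cons hadj p, by simp [hp]⟩
  have le_length : ∀ {u v} (p : G.Walk u v), D u v ≤ p.length := by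
    intro u v p
    induction p with
    | nil => simp [h_self]
    | @cons x y z hadj p ih =>
      have := h_adj x y z hadj
      rw [Walk.length_cons]
      omega
  obtain ⟨p, hp⟩ := exists_walk _ u v rfl
  have hreach : G.Reachable u v := ⟨p⟩
  obtain ⟨q, hq⟩ := hreach.exists_walk_length_eq_dist
  exact le_antisymm (hp ▸ dist_le p) (hq ▸ le_length q)

end SimpleGraph

namespace Spider

variable {k : ℕ} {L : Fin k → ℕ}

def height : Option ((i : Fin k) × Fin (L i)) → ℕ
  | none => 0
  | some x => x.2 + 1

def parent (x : (i : Fin k) × Fin (L i)) : Option ((i : Fin k) × Fin (L i)) :=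
  if (x.2 : ℕ) = 0 then none else some ⟨x.1, ⟨x.2 - 1, by omega⟩⟩

@[simp] lemma height_none : height (none : Option ((i : Fin k) × Fin (L i))) = 0 := rfl

@[simp] lemma height_some (x : (i : Fin k) × Fin (L i)) : height (some x) = x.2 + 1 := rfl

@[simp] lemma height_parent (x : (i : Fin k) × Fin (L i)) : height (parent x) = x.2 := by
  unfold parent; split_ifs <;> simp only [height_none, height_some] <;> omega

lemma some_mk_eq_some_mk {i i' : Fin k} {j : Fin (L i)} {j' : Fin (L i')} :
    (some ⟨i, j⟩ : Option ((i : Fin k) × Fin (L i))) = some ⟨i', j'⟩ ↔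
      i = i' ∧ (j : ℕ) = j' := by
  constructor
  · rintro ⟨⟩; simp
  · rintro ⟨rfl, h⟩; simp [Fin.ext h]

lemma parent_eq_some_iff {x y : (i : Fin k) × Fin (L i)} :
    parent y = some x ↔ y.1 = x.1 ∧ (y.2 : ℕ) = x.2 + 1 := by
  obtain ⟨i, j⟩ := x; obtain ⟨i', j'⟩ := y
  simp only [parent]
  split_ifs with h
  · simp only [false_iff, not_and]
    omega
  · rw [some_mk_eq_some_mk]
    constructor <;> rintro ⟨rfl, h'⟩ <;> exact ⟨rfl, by simp only at h' ⊢; omega⟩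

lemma parent_eq_none_iff {x : (i : Fin k) × Fin (L i)} : parent x = none ↔ (x.2 : ℕ) = 0 := by
  unfold parent; split_ifs <;> simpa

lemma adj_parent (x : (i : Fin k) × Fin (L i)) : (spider k L).Adj (parent x) (some x) := by
  obtain ⟨i, j⟩ := x
  rw [spider, fromRel_adj]
  refine ⟨fun h => by simpa using congrArg height h, Or.inl ?_⟩
  by_cases hj : (j : ℕ) = 0
  · exact Or.inl ⟨i, j, parent_eq_none_iff.2 hj, rfl, hj⟩
  · exact Or.inr ⟨i, ⟨j - 1, by omega⟩, j, by simp only [parent, hj, ↓reduceIte], rfl,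
      by simp only; omega⟩

lemma adj_iff {u v : Option ((i : Fin k) × Fin (L i))} :
    (spider k L).Adj u v ↔ ∃ x, s(parent x, some x) = s(u, v) := by
  constructor
  · rw [spider, fromRel_adj]
    rintro ⟨-, (⟨i, j, rfl, rfl, hj⟩ | ⟨i, j, j', rfl, rfl, hj⟩) |
      (⟨i, j, rfl, rfl, hj⟩ | ⟨i, j, j', rfl, rfl, hj⟩)⟩
    · exact ⟨⟨i, j⟩, by rw [parent_eq_none_iff.2 hj]⟩
    · have hp : parent ⟨i, j'⟩ = some ⟨i, j⟩ := parent_eq_some_iff.2 ⟨rfl, hj⟩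
      exact ⟨⟨i, j'⟩, by rw [hp]⟩
    · exact ⟨⟨i, j⟩, by rw [parent_eq_none_iff.2 hj, Sym2.eq_swap]⟩
    · have hp : parent ⟨i, j'⟩ = some ⟨i, j⟩ := parent_eq_some_iff.2 ⟨rfl, hj⟩
      exact ⟨⟨i, j'⟩, by rw [hp, Sym2.eq_swap]⟩
  · rintro ⟨x, hx⟩
    rcases Sym2.eq_iff.1 hx with ⟨rfl, rfl⟩ | ⟨rfl, rfl⟩
    exacts [adj_parent x, (adj_parent x).symm]

lemma edge_injective :
    Function.Injective fun x : (i : Fin k) × Fin (L i) => s(parent x, some x) := by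
  intro x y h
  rcases Sym2.eq_iff.1 h with ⟨-, h⟩ | ⟨h₁, h₂⟩
  · exact Option.some_injective _ h
  · have := congrArg height h₁; have := congrArg height h₂
    simp only [height_parent, height_some] at *; omega

lemma edgeFinset_eq : (spider k L).edgeFinset = univ.image fun x => s(parent x, some x) := by
  ext e
  induction e using Sym2.ind with
  | _ u v => simp [adj_iff]

lemma sum_edgeFinset_lift {M : Type*} [AddCommMonoid M]
    (f : {f : Option ((i : Fin k) × Fin (L i)) → Option ((i : Fin k) × Fin (L i)) → M //
      ∀ u v, f u v = f v u}) :
    ∑ e ∈ (spider k L).edgeFinset, Sym2.lift f e = ∑ x, f.1 (parent x) (some x) := by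
  rw [edgeFinset_eq, sum_image fun x _ y _ h => edge_injective h]
  rfl

def leg : Option ((i : Fin k) × Fin (L i)) → Option (Fin k) := Option.map Sigma.fst

def spiderDist (u v : Option ((i : Fin k) × Fin (L i))) : ℕ :=
  if leg u = leg v then Nat.dist (height u) (height v) else height u + height v

def branch (x : (i : Fin k) × Fin (L i)) : Finset (Option ((i : Fin k) × Fin (L i))) :=
  (Ici x.2).map ⟨fun j => some ⟨x.1, j⟩, fun _ _ h => by simpa using h⟩

lemma mem_branch {x : (i : Fin k) × Fin (L i)} {w : Option ((i : Fin k) × Fin (L i))} :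
    w ∈ branch x ↔ ∃ j, x.2 ≤ j ∧ some ⟨x.1, j⟩ = w := by
  simp only [branch, mem_map, mem_Ici]
  rfl

lemma card_branch (x : (i : Fin k) × Fin (L i)) : #(branch x) = L x.1 - x.2 := by
  simp [branch]

lemma spiderDist_comm (u v : Option ((i : Fin k) × Fin (L i))) :
    spiderDist u v = spiderDist v u := by
  unfold spiderDist
  by_cases h : leg u = leg v
  · simp [h, Nat.dist_comm]
  · simp [h, Ne.symm h, add_comm]

lemma spiderDist_none_left (v : Option ((i : Fin k) × Fin (L i))) :
    spiderDist none v = height v := by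
  rcases v with _ | v <;> simp [spiderDist, leg, Nat.dist]

lemma spiderDist_none_right (v : Option ((i : Fin k) × Fin (L i))) :
    spiderDist v none = height v := by
  rw [spiderDist_comm, spiderDist_none_left]

lemma spiderDist_some_some (x y : (i : Fin k) × Fin (L i)) :
    spiderDist (some x) (some y) =
      if x.1 = y.1 then Nat.dist (x.2 + 1) (y.2 + 1) else x.2 + y.2 + 2 := by
  simp only [spiderDist, leg, Option.map_some, Option.some_inj, height_some]
  split_ifs <;> omega

lemma spiderDist_parent_of_mem {x : (i : Fin k) × Fin (L i)}
    {w : Option ((i : Fin k) × Fin (L i))} (hw : w ∈ branch x) :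
    spiderDist (parent x) w = spiderDist (some x) w + 1 := by
  obtain ⟨j, hj, rfl⟩ := mem_branch.1 hw
  unfold parent
  split_ifs with h0
  · rw [spiderDist_none_left, spiderDist_some_some]
    simp only [height_some, ↓reduceIte, Nat.dist]
    omega
  · simp only [spiderDist_some_some, if_true]
    simp only [Nat.dist]
    omega

lemma spiderDist_some_of_notMem {x : (i : Fin k) × Fin (L i)}
    {w : Option ((i : Fin k) × Fin (L i))} (hw : w ∉ branch x) :
    spiderDist (some x) w = spiderDist (parent x) w + 1 := by
  rw [mem_branch] at hw
  rcases w with _ | y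
  · unfold parent
    split_ifs with h0 <;> simp only [spiderDist_none_right, height_some, height_none] <;> omega
  · unfold parent
    by_cases hi : x.1 = y.1
    · have hy : (y.2 : ℕ) < x.2 := by
        obtain ⟨i, j⟩ := y
        dsimp only at hi ⊢
        subst hi
        by_contra h
        exact hw ⟨j, Fin.le_def.2 (by omega), rfl⟩
      split_ifs <;>
        simp only [spiderDist_some_some, spiderDist_none_left, hi, if_true, height_some,
          Nat.dist] <;> omega
    · split_ifs <;>
        simp only [spiderDist_some_some, spiderDist_none_left, hi, if_false, height_some] <;>
        omega

lemma dist_eq_spiderDist (u v : Option ((i : Fin k) × Fin (L i))) :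
    (spider k L).dist u v = spiderDist u v := by
  refine dist_eq_of_adj_le_of_exists_adj _ _ (fun v => ?_) (fun u v w huv => ?_)
    (fun u v huv => ?_) u v
  · simp [spiderDist, Nat.dist]
  · obtain ⟨x, hx⟩ := adj_iff.1 huv
    by_cases hw : w ∈ branch x
    · have := spiderDist_parent_of_mem hw
      rcases Sym2.eq_iff.1 hx with ⟨rfl, rfl⟩ | ⟨rfl, rfl⟩ <;> omega
    · have := spiderDist_some_of_notMem hw
      rcases Sym2.eq_iff.1 hx with ⟨rfl, rfl⟩ | ⟨rfl, rfl⟩ <;> omega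
  · rcases u with _ | x
    · obtain ⟨y, rfl⟩ := Option.ne_none_iff_exists'.1 huv.symm
      let z : (i : Fin k) × Fin (L i) := ⟨y.1, ⟨0, y.2.pos⟩⟩
      have hz : parent z = none := parent_eq_none_iff.2 rfl
      have hy : some y ∈ branch z := mem_branch.2 ⟨y.2, Fin.le_def.2 (Nat.zero_le _), rfl⟩
      exact ⟨some z, hz ▸ adj_parent z, by rw [← hz, spiderDist_parent_of_mem hy]⟩
    · by_cases hv : v ∈ branch x
      · obtain ⟨j, hj, rfl⟩ := mem_branch.1 hv
        have hlt : (x.2 : ℕ) < j := by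
          by_contra h
          exact huv (by rw [show j = x.2 from Fin.ext (by rw [Fin.le_def] at hj; omega)])
        let y : (i : Fin k) × Fin (L i) := ⟨x.1, ⟨x.2 + 1, by omega⟩⟩
        have hy : parent y = some x := parent_eq_some_iff.2 ⟨rfl, rfl⟩
        have hj : some ⟨x.1, j⟩ ∈ branch y :=
          mem_branch.2 ⟨j, Fin.le_def.2 (show (x.2 : ℕ) + 1 ≤ j from hlt), rfl⟩
        exact ⟨some y, hy ▸ adj_parent y, by rw [← hy, spiderDist_parent_of_mem hj]⟩
      · exact ⟨parent x, (adj_parent x).symm, (spiderDist_some_of_notMem hv).symm⟩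

lemma closerCount_some_parent (x : (i : Fin k) × Fin (L i)) :
    closerCount (spider k L) (some x) (parent x) = L x.1 - x.2 := by
  rw [closerCount, ← card_branch x]
  congr 1
  ext w
  simp only [mem_filter, mem_univ, true_and, dist_eq_spiderDist, spiderDist_comm w]
  by_cases hw : w ∈ branch x
  · simp [hw, spiderDist_parent_of_mem hw]
  · simp [hw, spiderDist_some_of_notMem hw]

lemma closerCount_parent_some (x : (i : Fin k) × Fin (L i)) :
    closerCount (spider k L) (parent x) (some x) = ∑ i, L i + 1 - (L x.1 - x.2) := by
  have hcard : ∑ i, L i + 1 = Fintype.card (Option ((i : Fin k) × Fin (L i))) := by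
    simp
  rw [closerCount, ← card_branch x, hcard, ← card_compl]
  congr 1
  ext w
  simp only [mem_filter, mem_univ, true_and, mem_compl, dist_eq_spiderDist, spiderDist_comm w]
  by_cases hw : w ∈ branch x
  · simp [hw, spiderDist_parent_of_mem hw]
  · simp [hw, spiderDist_some_of_notMem hw]

theorem mostar_spider :
    mostar (spider k L) = ∑ x : (i : Fin k) × Fin (L i),
      |(∑ i, L i : ℤ) + 1 - 2 * ((L x.1 : ℤ) - x.2)| := by
  rw [mostar, sum_edgeFinset_lift]
  refine sum_congr rfl fun x _ => ?_
  have hle : L x.1 ≤ ∑ i, L i := single_le_sum (fun i _ => Nat.zero_le _) (mem_univ x.1)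
  have hlt : (x.2 : ℕ) < L x.1 := x.2.isLt
  simp only [closerCount_parent_some, closerCount_some_parent]
  rw [Nat.cast_sub (by omega), Nat.cast_sub hlt.le]
  push_cast
  ring_nf

lemma adj_none_iff {w : Option ((i : Fin k) × Fin (L i))} :
    (spider k L).Adj none w ↔ ∃ y : (i : Fin k) × Fin (L i), (y.2 : ℕ) = 0 ∧ w = some y := by
  rw [adj_iff]
  constructor
  · rintro ⟨y, hy⟩
    rcases Sym2.eq_iff.1 hy with ⟨h, rfl⟩ | ⟨-, h⟩
    exacts [⟨y, parent_eq_none_iff.1 h, rfl⟩, absurd h (Option.some_ne_none y)]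
  · rintro ⟨y, hy, rfl⟩
    exact ⟨y, by rw [parent_eq_none_iff.2 hy]⟩

lemma adj_some_iff {x : (i : Fin k) × Fin (L i)} {w : Option ((i : Fin k) × Fin (L i))} :
    (spider k L).Adj (some x) w ↔ w = parent x ∨ ∃ y, parent y = some x ∧ w = some y := by
  rw [adj_iff]
  constructor
  · rintro ⟨y, hy⟩
    rcases Sym2.eq_iff.1 hy with ⟨h, rfl⟩ | ⟨rfl, h⟩
    · exact Or.inr ⟨y, h, rfl⟩
    · obtain rfl := Option.some_injective _ h
      exact Or.inl rfl
  · rintro (rfl | ⟨y, hy, rfl⟩)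
    · exact ⟨x, Sym2.eq_swap⟩
    · exact ⟨y, by rw [hy]⟩

lemma degree_none (hL : ∀ i, 0 < L i) : (spider k L).degree none = k := by
  have : (spider k L).neighborFinset none =
      univ.map ⟨fun i => some ⟨i, ⟨0, hL i⟩⟩, fun _ _ h => (some_mk_eq_some_mk.1 h).1⟩ := by
    ext w
    simp only [mem_neighborFinset, adj_none_iff, mem_map, mem_univ, true_and]
    constructor
    · rintro ⟨⟨i, j⟩, hj, rfl⟩
      exact ⟨i, some_mk_eq_some_mk.2 ⟨rfl, hj.symm⟩⟩
    · rintro ⟨i, rfl⟩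
      exact ⟨_, rfl, rfl⟩
  rw [← card_neighborFinset_eq_degree, this, card_map, card_univ, Fintype.card_fin]

lemma degree_some (x : (i : Fin k) × Fin (L i)) :
    (spider k L).degree (some x) = if (x.2 : ℕ) + 1 = L x.1 then 1 else 2 := by
  obtain ⟨i, j⟩ := x
  dsimp only
  rw [← card_neighborFinset_eq_degree]
  split_ifs with h
  · rw [card_eq_one]
    refine ⟨parent ⟨i, j⟩, ?_⟩
    ext w
    simp only [mem_neighborFinset, adj_some_iff, mem_singleton, or_iff_left_iff_imp]
    rintro ⟨⟨i', j'⟩, hy, -⟩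
    obtain ⟨rfl, hj'⟩ := parent_eq_some_iff.1 hy
    have := j'.isLt
    simp only at h hj'
    omega
  · have hlt : (j : ℕ) + 1 < L i := by omega
    rw [card_eq_two]
    refine ⟨parent ⟨i, j⟩, some ⟨i, ⟨j + 1, hlt⟩⟩, fun h => ?_, ?_⟩
    · have := congrArg height h
      simp only [height_parent, height_some] at this
      omega
    ext w
    simp only [mem_neighborFinset, adj_some_iff, mem_insert, mem_singleton]
    refine or_congr_right ⟨?_, ?_⟩
    · rintro ⟨⟨i', j'⟩, hy, rfl⟩
      obtain ⟨rfl, hj'⟩ := parent_eq_some_iff.1 hy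
      exact some_mk_eq_some_mk.2 ⟨rfl, hj'⟩
    · rintro rfl
      exact ⟨⟨i, ⟨j + 1, hlt⟩⟩, parent_eq_some_iff.2 ⟨rfl, rfl⟩, rfl⟩

lemma degree_parent (hL : ∀ i, 0 < L i) (x : (i : Fin k) × Fin (L i)) :
    (spider k L).degree (parent x) = if (x.2 : ℕ) = 0 then k else 2 := by
  by_cases h : (x.2 : ℕ) = 0
  · rw [parent, if_pos h, if_pos h, degree_none hL]
  · have := x.2.isLt
    rw [parent, if_neg h, if_neg h, degree_some, if_neg (by dsimp only; omega)]

theorem irreg_spider (hL : ∀ i, 0 < L i) :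
    irreg (spider k L) = ∑ x : (i : Fin k) × Fin (L i),
      |(if (x.2 : ℕ) = 0 then k else 2 : ℤ) - if (x.2 : ℕ) + 1 = L x.1 then 1 else 2| := by
  rw [irreg, sum_edgeFinset_lift]
  refine sum_congr rfl fun x _ => ?_
  simp only [degree_parent hL, degree_some, Nat.cast_ite, Nat.cast_ofNat, Nat.cast_one]

end Spider

open Spider

theorem irreg_balancedSpider {a b : ℕ} (ha : 2 ≤ a) (hb : 1 ≤ b) :
    irreg (spider a fun _ => b) = a * (a - 1 : ℤ) := by
  have hterm (j : ℕ) : |(if j = 0 then a else 2 : ℤ) - if j + 1 = b then 1 else 2| =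
      (if j = 0 then (a : ℤ) - 2 else 0) + if j = b - 1 then 1 else 0 := by
    split_ifs <;> rw [abs_of_nonneg (by omega)] <;> omega
  rw [irreg_spider fun _ => hb, Fintype.sum_sigma]
  simp only [hterm]
  have hsum : ∑ j : Fin b, ((if (j : ℕ) = 0 then (a : ℤ) - 2 else 0) +
      if (j : ℕ) = b - 1 then 1 else 0) = a - 1 := by
    rw [Fin.sum_univ_eq_sum_range (fun j => (if j = 0 then (a : ℤ) - 2 else 0) +
      if j = b - 1 then 1 else 0), sum_add_distrib, sum_ite_eq', sum_ite_eq',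
      if_pos (mem_range.2 hb), if_pos (mem_range.2 (by omega))]
    ring
  simp only [hsum, sum_const, card_univ, Fintype.card_fin, nsmul_eq_mul]

theorem mostar_balancedSpider {a b : ℕ} (ha : 2 ≤ a) :
    mostar (spider a fun _ => b) = a ^ 2 * b ^ 2 - a * b ^ 2 := by
  rw [mostar_spider, Fintype.sum_sigma]
  have hterm (j : ℕ) : |(a : ℤ) * b + 1 - 2 * (b - j)| = (a - 2) * b + 1 + 2 * j := by
    rw [abs_of_nonneg (by nlinarith)]
    ring
  have gauss (n : ℕ) : (∑ j ∈ range n, (j : ℤ)) * 2 = n * (n - 1) := by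
    induction n with
    | zero => simp
    | succ n ih => rw [sum_range_succ, add_mul, ih]; push_cast; ring
  simp only [hterm, sum_const, card_univ, Fintype.card_fin, nsmul_eq_mul]
  rw [Fin.sum_univ_eq_sum_range (fun j => ((a : ℤ) - 2) * b + 1 + 2 * j), sum_add_distrib,
    sum_const, card_range, nsmul_eq_mul, ← mul_sum]
  linear_combination (a : ℤ) * gauss b

theorem irreg_mostar_balancedSpider (a b : ℕ) (ha : 2 ≤ a) (hb : 1 ≤ b) :
    irreg (spider a fun _ => b) = (a : ℤ) * ((a : ℤ) - 1) ∧
    mostar (spider a fun _ => b) = (a : ℤ) ^ 2 * (b : ℤ) ^ 2 - (a : ℤ) * (b : ℤ) ^ 2 :=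
  ⟨irreg_balancedSpider ha hb, mostar_balancedSpider ha⟩
end
end

section
/- For all integers a ≥ 2 and b ≥ 1, setting n = 1 + ab, the balanced spider S_{a,b} satisfies spr(S_{a,b}) = n²(n−1)/2 − a·b²·(2a² − 5a + 4)/4 when b is even, and spr(S_{a,b}) = n²(n−1)/2 − (a³b²/2 − 5a²b²/4 + a²/4 + ab² − a/2) when b is odd. -/
open SimpleGraph Finset

attribute [local instance] Classical.propDecidable

noncomputable section

/-!
Counting ordered pairs `(u, v)` and sorting every vertex `w` into closer to `u`, closer to `v`
or equidistant gives `2 spr(G) + E = n³`, where `E` counts the triples `(w, u, v)` with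
`d(w, u) = d(w, v)`; grouping by the common distance, `E = ∑_w ∑_r |S_r(w)|²` with `S_r(w)` the
sphere of radius `r` about `w`. In `S_{a,b}` a vertex at depth `p` (the centre has depth `0`)
sees at distance `s + 1` one vertex towards the centre (the centre included) if `s < p`, one
away from it if `p + s < b`, and one on each of the other `a - 1` legs if `p ≤ s < p + b`.
Summing the squares over `s` and then over the vertices leaves
`∑_{p ≤ b} min(p, b - p) = ⌊b² / 4⌋`, whence the two parity cases.
-/

section Peripherality

variable {V : Type*} [Fintype V] (G : SimpleGraph V)

theorem closerCount_self (v : V) : closerCount G v v = 0 := by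
  simp [closerCount]

theorem spr_eq_sum_sum_closerCount : spr G = ∑ v, ∑ u, closerCount G u v := by
  refine Finset.sum_congr rfl fun v _ => ?_
  rw [sprVertex, ← Finset.sum_erase_add _ _ (Finset.mem_univ v), closerCount_self, add_zero]

theorem closerCount_add_closerCount_add_card_equidistant (u v : V) :
    closerCount G u v + closerCount G v u + #{w | G.dist w u = G.dist w v} =
      Fintype.card V := by
  simp only [closerCount, Finset.card_filter, ← Finset.sum_add_distrib, Fintype.card_eq_sum_ones]
  refine Finset.sum_congr rfl fun w _ => ?_
  split_ifs <;> omega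

theorem card_filter_eq_eq_sum_sq {α : Type*} [Fintype α] (f : α → ℕ) (N : ℕ)
    (hf : ∀ x, f x < N) :
    #{p : α × α | f p.1 = f p.2} = ∑ r ∈ range N, #{x | f x = r} ^ 2 := by
  rw [Finset.card_eq_sum_card_fiberwise (f := fun p => f p.1) (t := range N)
    fun p _ => Finset.mem_range.2 (hf p.1)]
  refine Finset.sum_congr rfl fun r _ => ?_
  rw [sq, ← Finset.card_product, Finset.filter_filter]
  congr 1
  ext ⟨x, y⟩
  simp only [Finset.mem_filter, Finset.mem_univ, Finset.mem_product, true_and]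
  constructor
  · rintro ⟨hxy, rfl⟩; exact ⟨rfl, hxy.symm⟩
  · rintro ⟨rfl, hy⟩; exact ⟨hy.symm, rfl⟩

theorem two_mul_spr_add_sum_sq_card_sphere (N : ℕ) (hN : ∀ u v, G.dist u v < N) :
    2 * spr G + ∑ w, ∑ r ∈ range N, #{u | G.dist w u = r} ^ 2 = Fintype.card V ^ 3 := by
  have hequidistant : ∑ w, ∑ r ∈ range N, #{u | G.dist w u = r} ^ 2 =
      ∑ v, ∑ u, #{w | G.dist w u = G.dist w v} :=
    calc ∑ w, ∑ r ∈ range N, #{u | G.dist w u = r} ^ 2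
        = ∑ w, ∑ p : V × V, if G.dist w p.1 = G.dist w p.2 then 1 else 0 := by
          refine Finset.sum_congr rfl fun w _ => ?_
          rw [← card_filter_eq_eq_sum_sq _ N (hN w), Finset.card_filter]
      _ = ∑ u, ∑ v, #{w | G.dist w u = G.dist w v} := by
          rw [Finset.sum_comm, Fintype.sum_prod_type]
          simp only [Finset.card_filter]
      _ = ∑ v, ∑ u, #{w | G.dist w u = G.dist w v} := Finset.sum_comm
  have hswap : spr G = ∑ v, ∑ u, closerCount G v u := by
    rw [spr_eq_sum_sum_closerCount, Finset.sum_comm]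
  calc 2 * spr G + ∑ w, ∑ r ∈ range N, #{u | G.dist w u = r} ^ 2
      = ∑ v, ∑ u, (closerCount G u v + closerCount G v u +
          #{w | G.dist w u = G.dist w v}) := by
        rw [two_mul]
        nth_rw 2 [hswap]
        rw [spr_eq_sum_sum_closerCount, hequidistant]
        simp only [Finset.sum_add_distrib]
    _ = Fintype.card V ^ 3 := by
        simp only [closerCount_add_closerCount_add_card_equidistant, Finset.sum_const,
          Finset.card_univ, smul_eq_mul]
        ring

end Peripherality

namespace SimpleGraph

variable {V : Type*} {G : SimpleGraph V} (f : V → ℕ)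

theorem Walk.le_add_length_of_adj_le {x y : V} (hlip : ∀ x y, G.Adj x y → f x ≤ f y + 1)
    (p : G.Walk x y) : f x ≤ f y + p.length := by
  induction p with
  | nil => simp
  | cons h p ih => have := hlip _ _ h; simp only [Walk.length_cons]; omega

theorem exists_walk_length_eq_of_descent {v : V} (hv : f v = 0)
    (hdesc : ∀ x, x ≠ v → ∃ y, G.Adj x y ∧ f y + 1 = f x) (x : V) :
    ∃ p : G.Walk x v, p.length = f x := by
  suffices h : ∀ n x, f x = n → ∃ p : G.Walk x v, p.length = n from h _ x rfl
  intro n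
  induction n with
  | zero =>
    intro x hx
    by_cases hxv : x = v
    · exact hxv ▸ ⟨.nil, rfl⟩
    · obtain ⟨y, -, hy⟩ := hdesc x hxv
      omega
  | succ n ih =>
    intro x hx
    obtain ⟨y, hxy, hy⟩ := hdesc x (by rintro rfl; omega)
    obtain ⟨p, hp⟩ := ih y (by omega)
    exact ⟨.cons hxy p, by simp [hp]⟩

theorem dist_eq_of_descent {v : V} (hv : f v = 0) (hlip : ∀ x y, G.Adj x y → f x ≤ f y + 1)
    (hdesc : ∀ x, x ≠ v → ∃ y, G.Adj x y ∧ f y + 1 = f x) (x : V) :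
    G.dist x v = f x := by
  obtain ⟨p, hp⟩ := exists_walk_length_eq_of_descent f hv hdesc x
  obtain ⟨q, hq⟩ := p.reachable.exists_walk_length_eq_dist
  have := q.le_add_length_of_adj_le f hlip
  exact le_antisymm (hp ▸ dist_le p) (by omega)

end SimpleGraph

section SpiderDist

variable {k : ℕ} {L : Fin k → ℕ}

def spiderDepth : Option ((i : Fin k) × Fin (L i)) → ℕ
  | none => 0
  | some x => x.2 + 1

def spiderLeg : Option ((i : Fin k) × Fin (L i)) → Option (Fin k)
  | none => none
  | some x => some x.1

def spiderDist (u v : Option ((i : Fin k) × Fin (L i))) : ℕ :=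
  if spiderLeg u = spiderLeg v then Nat.dist (spiderDepth u) (spiderDepth v)
  else spiderDepth u + spiderDepth v

theorem spider_adj_none (i : Fin k) (h : 0 < L i) :
    (spider k L).Adj none (some ⟨i, ⟨0, h⟩⟩) := by
  rw [spider, fromRel_adj]
  exact ⟨by simp, Or.inl (Or.inl ⟨i, _, rfl, rfl, rfl⟩)⟩

theorem spider_adj_succ (i : Fin k) (j : ℕ) (h : j + 1 < L i) :
    (spider k L).Adj (some ⟨i, ⟨j, by omega⟩⟩) (some ⟨i, ⟨j + 1, h⟩⟩) := by
  rw [spider, fromRel_adj]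
  exact ⟨by simp, Or.inl (Or.inr ⟨i, _, _, rfl, rfl, rfl⟩)⟩

theorem spiderDist_le_of_adj {x y : Option ((i : Fin k) × Fin (L i))}
    (h : (spider k L).Adj x y) (v : Option ((i : Fin k) × Fin (L i))) :
    spiderDist x v ≤ spiderDist y v + 1 := by
  rw [spider, fromRel_adj] at h
  obtain ⟨-, (⟨i, j, rfl, rfl, hj⟩ | ⟨i, j, j', rfl, rfl, hj⟩) |
    (⟨i, j, rfl, rfl, hj⟩ | ⟨i, j, j', rfl, rfl, hj⟩)⟩ := h <;>
  rcases v with _ | ⟨i', j''⟩ <;>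
  simp only [spiderDist, spiderLeg, spiderDepth, Nat.dist, reduceCtorEq, if_false, if_true,
    Option.some.injEq] <;>
  (try split_ifs) <;> omega

theorem exists_spider_adj_spiderDist_add_one_eq {x v : Option ((i : Fin k) × Fin (L i))}
    (hxv : x ≠ v) : ∃ y, (spider k L).Adj x y ∧ spiderDist y v + 1 = spiderDist x v := by
  rcases x with _ | ⟨i, j, hj⟩
  · obtain ⟨⟨i, q⟩, rfl⟩ := Option.ne_none_iff_exists'.1 hxv.symm
    refine ⟨some ⟨i, ⟨0, q.pos⟩⟩, spider_adj_none i _, ?_⟩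
    simp [spiderDist, spiderLeg, spiderDepth, Nat.dist]
  -- step away from the centre if `v` lies deeper on the leg of `x`, towards it otherwise
  by_cases hout : ∃ q : Fin (L i), v = some ⟨i, q⟩ ∧ j < q
  · obtain ⟨q, rfl, hjq⟩ := hout
    refine ⟨some ⟨i, ⟨j + 1, by omega⟩⟩, spider_adj_succ i j _, ?_⟩
    simp only [spiderDist, spiderLeg, spiderDepth, Nat.dist, if_true]
    omega
  have hq : ∀ q : Fin (L i), v = some ⟨i, q⟩ → (q : ℕ) < j := by
    rintro q rfl
    have hne : (q : ℕ) ≠ j := fun h => hxv (by subst h; rfl)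
    have := not_exists.1 hout q
    simp only [true_and, not_lt] at this
    omega
  rcases j with _ | j
  · refine ⟨none, (spider_adj_none i _).symm, ?_⟩
    rcases v with _ | ⟨i', q⟩
    · simp [spiderDist, spiderLeg, spiderDepth]
    · by_cases h : i' = i
      · subst h; exact absurd (hq q rfl) (Nat.not_lt_zero _)
      · simp only [spiderDist, spiderLeg, reduceCtorEq, ↓reduceIte, spiderDepth, zero_add,
          Option.some.injEq, Ne.symm h]
        omega
  · refine ⟨some ⟨i, ⟨j, by omega⟩⟩, (spider_adj_succ i j hj).symm, ?_⟩
    rcases v with _ | ⟨i', q⟩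
    · simp [spiderDist, spiderLeg, spiderDepth]
    · by_cases h : i' = i
      · subst h
        have := hq q rfl
        simp only [spiderDist, spiderLeg, ↓reduceIte, Nat.dist, spiderDepth]
        omega
      · simp only [spiderDist, spiderLeg, Option.some.injEq, Ne.symm h, ↓reduceIte, spiderDepth]
        omega

theorem spider_dist (u v : Option ((i : Fin k) × Fin (L i))) :
    (spider k L).dist u v = spiderDist u v :=
  dist_eq_of_descent (spiderDist · v) (by simp [spiderDist])
    (fun _ _ h => spiderDist_le_of_adj h v) (fun _ h => exists_spider_adj_spiderDist_add_one_eq h) u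

theorem spider_reachable (u v : Option ((i : Fin k) × Fin (L i))) :
    (spider k L).Reachable u v :=
  let ⟨p, _⟩ := exists_walk_length_eq_of_descent (spiderDist · v) (by simp [spiderDist])
    (fun _ h => exists_spider_adj_spiderDist_add_one_eq h) u
  ⟨p⟩

theorem spiderDist_le_add (u v : Option ((i : Fin k) × Fin (L i))) :
    spiderDist u v ≤ spiderDepth u + spiderDepth v := by
  unfold spiderDist Nat.dist
  split_ifs <;> omega

end SpiderDist

theorem sum_fin_ite_add_eq (b c r : ℕ) :
    ∑ q : Fin b, (if (q : ℕ) + c = r then 1 else 0) =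
      if c ≤ r ∧ r < c + b then 1 else 0 := by
  rw [Fin.sum_univ_eq_sum_range (fun q => if q + c = r then 1 else 0)]
  by_cases hc : c ≤ r
  · have hiff : ∀ q, q + c = r ↔ q = r - c := fun q => by omega
    simp only [hiff, Finset.sum_ite_eq', Finset.mem_range]
    split_ifs <;> omega
  · rw [Finset.sum_eq_zero fun q _ => if_neg (by omega), if_neg (by omega)]

theorem sum_range_ite_lt (N m : ℕ) (h : m ≤ N) :
    ∑ s ∈ range N, (if s < m then 1 else 0) = m := by
  rw [Finset.sum_boole, Nat.cast_id, show (range N).filter (· < m) = range m by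
    ext; simp only [Finset.mem_filter, Finset.mem_range]; omega,
    Finset.card_range]

theorem sum_range_ite_mem_Ico (N lo hi : ℕ) (h : hi ≤ N) :
    ∑ s ∈ range N, (if lo ≤ s ∧ s < hi then 1 else 0) = hi - lo := by
  rw [Finset.sum_boole, Nat.cast_id,
    show (range N).filter (fun s => lo ≤ s ∧ s < hi) = Ico lo hi by
    ext; simp only [Finset.mem_filter, Finset.mem_range, Finset.mem_Ico]; omega,
    Nat.card_Ico]

theorem four_mul_sum_range_min_add_mod_two (b : ℕ) :
    4 * ∑ j ∈ range b, min (j + 1) (b - (j + 1)) + b % 2 = b ^ 2 := by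
  induction b using Nat.twoStepInduction with
  | zero => simp
  | one => simp
  | more b ih _ =>
    have hstep : ∑ j ∈ range (b + 2), min (j + 1) (b + 2 - (j + 1)) =
        ∑ j ∈ range b, min (j + 1) (b - (j + 1)) + (b + 1) := by
      rw [Finset.sum_range_succ, Finset.sum_range_succ']
      have hterm : ∀ j ∈ range b, min (j + 1 + 1) (b + 2 - (j + 1 + 1)) =
          min (j + 1) (b - (j + 1)) + 1 := fun j hj => by
        rw [Finset.mem_range] at hj; omega
      rw [Finset.sum_congr rfl hterm, Finset.sum_add_distrib, Finset.sum_const, Finset.card_range,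
        smul_eq_mul, mul_one]
      omega
    rw [hstep]
    have : (b + 2) % 2 = b % 2 := by omega
    linarith [ih]

/-- The size of the sphere of radius `s + 1` about a vertex at depth `p` of `S_{a,b}`. -/
def spiderSphereCard (a b p s : ℕ) : ℕ :=
  (if s < p then 1 else 0) + (if p + s < b then 1 else 0) +
    (a - 1) * (if p ≤ s ∧ s < p + b then 1 else 0)

theorem sum_range_sq_spiderSphereCard {a b p N : ℕ} (ha : 0 < a) (hp : p ≤ b)
    (hN : p + b ≤ N) :
    ∑ s ∈ range N, spiderSphereCard a b p s ^ 2 + 2 * (a - 1) * (min p (b - p) + p) =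
      a ^ 2 * b + 2 * min p (b - p) := by
  obtain ⟨c, rfl⟩ := Nat.exists_eq_add_of_le' ha
  rw [Nat.add_sub_cancel]
  have hpt : ∀ s, spiderSphereCard (c + 1) b p s ^ 2 +
        2 * c * (if s < min p (b - p) then 1 else 0) =
      (if s < p then 1 else 0) + (1 + 2 * c) * (if s < b - p then 1 else 0) +
        c ^ 2 * (if p ≤ s ∧ s < p + b then 1 else 0) +
        2 * (if s < min p (b - p) then 1 else 0) := by
    intro s
    unfold spiderSphereCard
    rw [Nat.add_sub_cancel]
    split_ifs <;> first | ring1 | omega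
  have hsum := Finset.sum_congr rfl fun s (_ : s ∈ range N) => hpt s
  simp only [Finset.sum_add_distrib, ← Finset.mul_sum] at hsum
  rw [sum_range_ite_lt N p (by omega), sum_range_ite_lt N (b - p) (by omega),
    sum_range_ite_lt N _ (by omega), sum_range_ite_mem_Ico N p (p + b) hN,
    Nat.add_sub_cancel_left] at hsum
  obtain ⟨q, rfl⟩ := Nat.exists_eq_add_of_le hp
  rw [Nat.add_sub_cancel_left] at hsum ⊢
  linarith [hsum]

section BalancedSpider

variable {a b : ℕ}

theorem spiderDepth_le (w : Option ((_ : Fin a) × Fin b)) : spiderDepth w ≤ b := by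
  rcases w with _ | ⟨i, j⟩
  · exact Nat.zero_le b
  · exact j.isLt

theorem sum_spiderDepth {M : Type*} [AddCommMonoid M] (g : ℕ → M) :
    ∑ w : Option ((_ : Fin a) × Fin b), g (spiderDepth w) =
      g 0 + a • ∑ j ∈ range b, g (j + 1) := by
  simp only [Fintype.sum_option, Fintype.sum_sigma, spiderDepth,
    Fin.sum_univ_eq_sum_range (fun j => g (j + 1)), Finset.sum_const, Finset.card_univ,
    Fintype.card_fin]

theorem card_spider_sphere_succ (ha : 0 < a) (w : Option ((_ : Fin a) × Fin b)) (s : ℕ) :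
    #{u | (spider a fun _ => b).dist w u = s + 1} = spiderSphereCard a b (spiderDepth w) s := by
  simp only [Finset.card_filter, spider_dist, Fintype.sum_option, Fintype.sum_sigma]
  unfold spiderSphereCard
  rcases w with _ | ⟨i, j⟩
  · have hcentre : spiderDist (none : Option ((_ : Fin a) × Fin b)) none = 0 := by
      simp [spiderDist]
    have hleg : ∀ (k : Fin a) (q : Fin b),
        spiderDist (none : Option ((_ : Fin a) × Fin b)) (some ⟨k, q⟩) = q + 1 := by
      simp [spiderDist, spiderLeg, spiderDepth]
    rw [spiderDepth]
    simp only [hleg, hcentre, sum_fin_ite_add_eq, Finset.sum_const, Finset.card_univ,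
      Fintype.card_fin, smul_eq_mul]
    rw [if_neg (Nat.zero_ne_add_one s)]
    split_ifs <;> omega
  · have hcentre : spiderDist (some ⟨i, j⟩ : Option ((_ : Fin a) × Fin b)) none = j + 1 := by
      simp [spiderDist, spiderLeg, spiderDepth]
    have hown : ∀ q : Fin b, spiderDist (some ⟨i, j⟩ : Option ((_ : Fin a) × Fin b))
        (some ⟨i, q⟩) = Nat.dist (j + 1) (q + 1) := by
      simp [spiderDist, spiderLeg, spiderDepth]
    have hother : ∀ k ≠ i, ∀ q : Fin b,
        spiderDist (some ⟨i, j⟩ : Option ((_ : Fin a) × Fin b)) (some ⟨k, q⟩) =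
          q + (j + 2) := by
      intro k hk q
      simp only [spiderDist, spiderLeg, Option.some.injEq, Ne.symm hk, ↓reduceIte, spiderDepth]
      omega
    have hdist : ∀ q : Fin b, (if Nat.dist (j + 1) (q + 1) = s + 1 then 1 else 0) =
        (if (q : ℕ) + (s + 1) = j then 1 else 0) +
          (if (q : ℕ) + 0 = j + (s + 1) then 1 else 0) := by
      intro q
      unfold Nat.dist
      split_ifs <;> omega
    rw [spiderDepth, Fintype.sum_eq_add_sum_compl i]
    simp only [hcentre, hown, hdist, Finset.sum_add_distrib, sum_fin_ite_add_eq]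
    rw [Finset.sum_congr rfl fun k hk => by
      rw [Finset.sum_congr rfl fun q _ => by rw [hother k (by simpa using hk) q],
        sum_fin_ite_add_eq]]
    simp only [Finset.sum_const, Finset.card_compl, Finset.card_singleton, Fintype.card_fin,
      smul_eq_mul]
    split_ifs <;> omega

theorem sum_sq_card_spider_sphere (ha : 0 < a) (w : Option ((_ : Fin a) × Fin b)) :
    ∑ r ∈ range (2 * b + 1), #{u | (spider a fun _ => b).dist w u = r} ^ 2 +
        2 * (a - 1) * (min (spiderDepth w) (b - spiderDepth w) + spiderDepth w) =
      1 + a ^ 2 * b + 2 * min (spiderDepth w) (b - spiderDepth w) := by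
  have hzero : #{u | (spider a fun _ => b).dist w u = 0} = 1 := by
    simp only [(spider_reachable w _).dist_eq_zero_iff]
    exact Finset.card_eq_one.2 ⟨w, by ext; simp [eq_comm]⟩
  have hp := spiderDepth_le w
  rw [Finset.sum_range_succ', hzero]
  simp only [card_spider_sphere_succ ha]
  have := sum_range_sq_spiderSphereCard ha hp (show spiderDepth w + b ≤ 2 * b by omega)
  omega

theorem spr_balancedSpider_eq (ha : 0 < a) :
    (spr (spider a fun _ => b) : ℚ) =
      ((a * b + 1) ^ 3 - (a * b + 1) * (1 + a ^ 2 * b)) / 2 +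
        a * (a - 2) * (b ^ 2 - (b % 2 : ℕ)) / 4 + a * (a - 1) * b * (b + 1) / 2 := by
  have hcard : Fintype.card (Option ((_ : Fin a) × Fin b)) = a * b + 1 := by simp
  have hspr := two_mul_spr_add_sum_sq_card_sphere (spider a fun _ => b) (2 * b + 1)
    fun u v => by
      have := spiderDist_le_add u v
      have := spiderDepth_le u
      have := spiderDepth_le v
      rw [spider_dist]
      omega
  have hT := Finset.sum_congr rfl fun w (_ : w ∈ univ) => sum_sq_card_spider_sphere (b := b) ha w
  have hmin := sum_spiderDepth (a := a) (b := b) fun p => min p (b - p)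
  have hdepth := sum_spiderDepth (a := a) (b := b) fun p => p
  simp only [Finset.sum_add_distrib, ← Finset.mul_sum, Finset.sum_const, Finset.card_univ,
    smul_eq_mul] at hT hmin hdepth
  rw [hmin, hdepth, hcard] at hT
  rw [hcard] at hspr
  have hQ := four_mul_sum_range_min_add_mod_two b
  have hP := Finset.sum_range_id_mul_two (b + 1)
  rw [Finset.sum_range_succ, Nat.add_sub_cancel] at hP
  simp only [Finset.card_range, Nat.zero_min, zero_add, mul_one] at hT
  generalize ∑ j ∈ range b, min (j + 1) (b - (j + 1)) = Q at hT hQ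
  generalize ∑ j ∈ range b, j = P at hT hP
  generalize ∑ w, ∑ r ∈ range (2 * b + 1), #{u | (spider a fun _ => b).dist w u = r} ^ 2 = T
    at hT hspr
  generalize b % 2 = m at hQ ⊢
  have ha1 : ((a - 1 : ℕ) : ℚ) = a - 1 := by rw [Nat.cast_sub ha, Nat.cast_one]
  qify at hT hspr hQ hP
  rw [ha1] at hT
  linear_combination (1 / 2 : ℚ) * hspr - (1 / 2 : ℚ) * hT + (a * (a - 2) / 4 : ℚ) * hQ
    + (a * (a - 1) / 2 : ℚ) * hP

end BalancedSpider

theorem spr_balancedSpider_general (a b : ℕ) (ha : 2 ≤ a)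
    (n : ℕ) (hn : n = 1 + a * b) :
    (Even b → (spr (spider a fun _ => b) : ℚ) =
      (n : ℚ) ^ 2 * ((n : ℚ) - 1) / 2
        - (a : ℚ) * (b : ℚ) ^ 2 * (2 * (a : ℚ) ^ 2 - 5 * a + 4) / 4) ∧
    (Odd b → (spr (spider a fun _ => b) : ℚ) =
      (n : ℚ) ^ 2 * ((n : ℚ) - 1) / 2
        - ((a : ℚ) ^ 3 * (b : ℚ) ^ 2 / 2 - 5 * (a : ℚ) ^ 2 * (b : ℚ) ^ 2 / 4
            + (a : ℚ) ^ 2 / 4 + (a : ℚ) * (b : ℚ) ^ 2 - (a : ℚ) / 2)) := by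
  subst hn
  rw [spr_balancedSpider_eq (by omega)]
  refine ⟨fun hb => ?_, fun hb => ?_⟩
  · rw [Nat.even_iff.1 hb]
    push_cast
    ring
  · rw [Nat.odd_iff.1 hb]
    push_cast
    ring

theorem spr_balancedSpider (a b : ℕ) (ha : 2 ≤ a) (hb : 1 ≤ b)
    (n : ℕ) (hn : n = 1 + a * b) :
    (Even b → (spr (spider a fun _ => b) : ℚ) =
      (n : ℚ) ^ 2 * ((n : ℚ) - 1) / 2
        - (a : ℚ) * (b : ℚ) ^ 2 * (2 * (a : ℚ) ^ 2 - 5 * a + 4) / 4) ∧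
    (Odd b → (spr (spider a fun _ => b) : ℚ) =
      (n : ℚ) ^ 2 * ((n : ℚ) - 1) / 2
        - ((a : ℚ) ^ 3 * (b : ℚ) ^ 2 / 2 - 5 * (a : ℚ) ^ 2 * (b : ℚ) ^ 2 / 4
            + (a : ℚ) ^ 2 / 4 + (a : ℚ) * (b : ℚ) ^ 2 - (a : ℚ) / 2)) :=
  spr_balancedSpider_general a b ha n hn
end
end
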